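/- arXiv:2404.13689 — 3 statements merged into one kernel-verified Lean document; each statement's English description precedes it below -/
import Mathlib

section
/- Let μ > 0 and consider the quartic polynomial f(λ) = λ⁴ + λ³ + (μ^{2α} + 2μ + μ^β)λ² + (μ^{2α} + 2μ)λ + 2μ^{1+β}, where α, β ∈ [0,1] with α > (β+1)/2. Then as μ → ∞, f has a pair of complex conjugate roots λ_{1,2}(μ) = −(1/2)μ^{β−2α}(1 + o(1)) ± i μ^{α}(1 + o(1)), a real root λ₃(μ) = −2μ^{−2α+β+1}(1 + o(1)), and a real root λ₄(μ) = −1 + o(1). -/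
open Complex

noncomputable section

/-- The characteristic quartic of the thermoelastic system without inertial term
(`m = 0`, `σ = 2`, `τ = 1`) on the eigenspace of `A` with eigenvalue `μ`. -/
def quarticNoInertia (α β μ : ℝ) (z : ℂ) : ℂ :=
  z ^ 4 + z ^ 3 + ((μ ^ (2 * α) + 2 * μ + μ ^ β : ℝ) : ℂ) * z ^ 2
    + ((μ ^ (2 * α) + 2 * μ : ℝ) : ℂ) * z + ((2 * μ ^ (1 + β) : ℝ) : ℂ)

set_option maxHeartbeats 2000000

private lemma upper_sign (ε A B m b : ℝ) (hε0 : 0 < ε) (hε1 : ε ≤ 1/2)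
    (hm : 1 ≤ m) (hB1 : 1 ≤ B) (hBm : B ≤ m) (hmA' : 16000*m ≤ A)
    (hb0 : 0 < b) (hb100 : b ≤ 1/100) (hbA : b*A = (1+ε/8)*B) :
    (A+2*m - b*(A+2*m+B - b + b^2)) * ((1-b)*(A+2*m+B - b + b^2) - (A+2*m))
      - (2*m*B)*(1-2*b)^2 < 0 := by
  have hA1 : (1:ℝ) ≤ A := by linarith
  have hBpos : (0:ℝ) < B := by linarith
  have hbsq : b^2 ≤ 1 := pow_le_one₀ hb0.le (by linarith)
  have hSl : 0 ≤ A+2*m+B - b + b^2 := by linarith [sq_nonneg b]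
  have hSh : A+2*m+B - b + b^2 ≤ 2*A := by linarith
  have hbS : b*(A+2*m+B - b + b^2) ≤ 4*B := by
    have h1 : b*(A+2*m+B - b + b^2) ≤ b*(2*A) := mul_le_mul_of_nonneg_left hSh hb0.le
    have h2 : b*(2*A) = 2*(b*A) := by ring
    rw [h2, hbA] at h1
    have hεB : ε*B ≤ B := by
      calc ε*B ≤ 1*B := mul_le_mul_of_nonneg_right (by linarith) (by linarith)
        _ = B := one_mul B
    linarith
  have hP1 : 0 < A+2*m - b*(A+2*m+B - b + b^2) := by linarith
  have h3 : 0 ≤ b*(2*m+B) := mul_nonneg hb0.le (by linarith)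
  have hb2b : 2*b^2 ≤ b := by
    have h := mul_le_mul_of_nonneg_left (show b ≤ 1/2 by linarith) hb0.le
    linarith [h]
  have hb3 : 0 ≤ b^3 := by positivity
  have hP2 : (1-b)*(A+2*m+B - b + b^2) - (A+2*m) ≤ -((ε/8)*B) := by
    have hid : (1-b)*(A+2*m+B - b + b^2) - (A+2*m)
        = B - (b*A + b*(2*m+B)) - b + 2*b^2 - b^3 := by ring
    rw [hid, hbA]
    linarith
  have hP2' : (1-b)*(A+2*m+B - b + b^2) - (A+2*m) < 0 := by
    have : 0 < (ε/8)*B := by positivity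
    linarith
  have hPP := mul_neg_of_pos_of_neg hP1 hP2'
  have hrpos : 0 ≤ (2*m*B)*(1-2*b)^2 := by positivity
  linarith

private lemma lower_sign (ε A B m b : ℝ) (hε0 : 0 < ε) (hε1 : ε ≤ 1/2)
    (hm : 1 ≤ m) (hB1 : 1 ≤ B) (hBm : B ≤ m) (hmA' : 16000*m ≤ A)
    (hAbig : 8000 ≤ ε*A) (hmε : 8000*m ≤ ε*A)
    (hb0 : 0 < b) (hb100 : b ≤ 1/100) (hbA : b*A = (1-ε/8)*B) :
    0 < (A+2*m - b*(A+2*m+B - b + b^2)) * ((1-b)*(A+2*m+B - b + b^2) - (A+2*m))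
      - (2*m*B)*(1-2*b)^2 := by
  have hA1 : (1:ℝ) ≤ A := by linarith
  have hApos : (0:ℝ) < A := by linarith
  have hBpos : (0:ℝ) < B := by linarith
  have hmpos : (0:ℝ) < m := by linarith
  have hbsq : b^2 ≤ 1 := pow_le_one₀ hb0.le (by linarith)
  have hSl : 0 ≤ A+2*m+B - b + b^2 := by linarith [sq_nonneg b]
  have hSh : A+2*m+B - b + b^2 ≤ 2*A := by linarith
  have hbS : b*(A+2*m+B - b + b^2) ≤ 4*B := by
    have h1 : b*(A+2*m+B - b + b^2) ≤ b*(2*A) := mul_le_mul_of_nonneg_left hSh hb0.le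
    have h2 : b*(2*A) = 2*(b*A) := by ring
    rw [h2, hbA] at h1
    have hεB : 0 ≤ ε*B := by positivity
    linarith
  -- b*m ≤ (ε/8000)*B and b ≤ (ε/8000)*B
  have k1 : 8000*m*B ≤ ε*A*B := mul_le_mul_of_nonneg_right hmε hBpos.le
  have hbm : b*m ≤ (ε/8000)*B := by
    have e1 : (b*m)*A = (1-ε/8)*(B*m) := by
      calc (b*m)*A = (b*A)*m := by ring
        _ = (1-ε/8)*(B*m) := by rw [hbA]; ring
    have e2 : (b*m)*A ≤ ((ε/8000)*B)*A := by
      linarith [e1, k1, mul_nonneg (mul_nonneg hε0.le hBpos.le) hmpos.le]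
    exact le_of_mul_le_mul_right e2 hApos
  have hbB : b ≤ (ε/8000)*B := by
    have e3 : B*1 ≤ B*((ε/8000)*A) :=
      mul_le_mul_of_nonneg_left (by linarith) hBpos.le
    have e2 : b*A ≤ ((ε/8000)*B)*A := by
      have hεB : 0 ≤ ε*B := by positivity
      linarith [e3]
    exact le_of_mul_le_mul_right e2 hApos
  have hb3b : b^3 ≤ b := by
    have h := mul_le_mul_of_nonneg_left hbsq hb0.le
    have h2 : b*b^2 = b^3 := by ring
    linarith [h, h2]
  have hP2 : (ε/10)*B ≤ (1-b)*(A+2*m+B - b + b^2) - (A+2*m) := by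
    have hid : (1-b)*(A+2*m+B - b + b^2) - (A+2*m)
        = B - (b*A + b*(2*m+B)) - b + 2*b^2 - b^3 := by ring
    rw [hid, hbA]
    have h4 : b*(2*m+B) ≤ b*(3*m) := mul_le_mul_of_nonneg_left (by linarith) hb0.le
    have h5 : b*(3*m) = 3*(b*m) := by ring
    linarith [h4, h5, hbm, hbB, hb3b, sq_nonneg b]
  have hP1l : A - 2*m ≤ A+2*m - b*(A+2*m+B - b + b^2) := by linarith
  have hprod : (A - 2*m)*((ε/10)*B) ≤
      (A+2*m - b*(A+2*m+B - b + b^2)) * ((1-b)*(A+2*m+B - b + b^2) - (A+2*m)) :=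
    mul_le_mul hP1l hP2 (by positivity) (by linarith)
  have hr1 : (2*m*B)*(1-2*b)^2 ≤ 2*m*B := by
    have h6 : (1-2*b)^2 ≤ 1 := pow_le_one₀ (by linarith) (by linarith)
    have h7 := mul_le_mul_of_nonneg_left h6 (show (0:ℝ) ≤ 2*m*B by positivity)
    linarith [h7]
  have k2 : ε*(m*B) ≤ (1/2)*(m*B) := mul_le_mul_of_nonneg_right hε1 (by positivity)
  linarith [hprod, hr1, k1, k2, mul_pos hmpos hBpos]

private lemma build (ε A B m b : ℝ) (hε0 : 0 < ε) (hε1 : ε ≤ 1/2)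
    (hm : 1 ≤ m) (hB1 : 1 ≤ B) (hBm : B ≤ m) (hmA' : 16000*m ≤ A)
    (hAbig : 8000 ≤ ε*A) (hmε : 8000*m ≤ ε*A) (hsmall : 100*(m*B) ≤ ε*A)
    (hb0 : 0 < b) (hb100 : b ≤ 1/100)
    (hblA : (1-ε/8)*B ≤ b*A) (hbuA : b*A ≤ (1+ε/8)*B)
    (hFb : (A+2*m - b*(A+2*m+B - b + b^2)) * ((1-b)*(A+2*m+B - b + b^2) - (A+2*m))
      = (2*m*B)*(1-2*b)^2) :
    ∃ c x3 x4 : ℝ,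
      c + x3 * x4 + b * (1 - b) = A + 2 * m + B ∧
      b * (x3 * x4) + c * (1 - b) = A + 2 * m ∧
      c * (x3 * x4) = 2 * m * B ∧
      x3 + x4 = -(1 - b) ∧
      4 * (1 - ε) ^ 2 * A ≤ 4 * c - b ^ 2 ∧
      4 * c - b ^ 2 ≤ 4 * (1 + ε) ^ 2 * A ∧
      |x3 + 2 * (m * B) / A| ≤ ε * (2 * (m * B) / A) ∧
      |x4 + 1| ≤ ε := by
  have hA1 : (1:ℝ) ≤ A := by linarith
  have hApos : (0:ℝ) < A := by linarith
  have hBpos : (0:ℝ) < B := by linarith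
  have hmpos : (0:ℝ) < m := by linarith
  have h2b : (0:ℝ) < 1 - 2*b := by linarith
  have hbsq : b^2 ≤ 1 := pow_le_one₀ hb0.le (by linarith)
  have hSl : 0 ≤ A+2*m+B - b + b^2 := by linarith [sq_nonneg b]
  have hSh : A+2*m+B - b + b^2 ≤ 2*A := by linarith
  have hεB : 0 ≤ ε*B := by positivity
  have hεB2 : ε*B ≤ B := by
    calc ε*B ≤ 1*B := mul_le_mul_of_nonneg_right (by linarith) hBpos.le
      _ = B := one_mul B
  have hεA2 : ε*A ≤ A := by
    calc ε*A ≤ 1*A := mul_le_mul_of_nonneg_right (by linarith) hApos.le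
      _ = A := one_mul A
  have hbS : b*(A+2*m+B - b + b^2) ≤ 4*B := by
    have h1 : b*(A+2*m+B - b + b^2) ≤ b*(2*A) := mul_le_mul_of_nonneg_left hSh hb0.le
    have h2 : b*(2*A) = 2*(b*A) := by ring
    rw [h2] at h1
    linarith
  have hbS0 : 0 ≤ b*(A+2*m+B - b + b^2) := mul_nonneg hb0.le hSl
  have hbA2B : b*A ≤ 2*B := by linarith
  -- b ≤ ε/50
  have hbε : b ≤ ε/50 := by
    have e3 : 100*B ≤ ε*A := by
      have h := mul_le_mul_of_nonneg_right hm hBpos.le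
      linarith [h, hsmall]
    have e2 : b*A ≤ (ε/50)*A := by linarith
    exact le_of_mul_le_mul_right e2 hApos
  set c := (A+2*m - b*(A+2*m+B - b + b^2))/(1-2*b) with hc_def
  set e := ((1-b)*(A+2*m+B - b + b^2) - (A+2*m))/(1-2*b) with he_def
  have hce : c*e = 2*m*B := by
    rw [hc_def, he_def]
    field_simp
    linear_combination hFb
  have hv2 : c + e + b*(1-b) = A+2*m+B := by
    rw [hc_def, he_def]
    field_simp
    ring
  have hv3 : b*e + c*(1-b) = A+2*m := by
    rw [hc_def, he_def]
    rw [mul_div_assoc', div_mul_eq_mul_div, ← add_div, div_eq_iff h2b.ne']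
    ring
  -- c is close to A
  have hcA : (c - A)*(1-2*b) = 2*m - b*(A+2*m+B - b + b^2) + 2*(b*A) := by
    rw [hc_def]
    field_simp
    ring
  have hNu : (c - A)*(1-2*b) ≤ (ε/800)*A := by
    have : 2*m - b*(A+2*m+B - b + b^2) + 2*(b*A) ≤ 10*m := by linarith
    linarith [hcA, this]
  have hNl : -((ε/800)*A) ≤ (c - A)*(1-2*b) := by
    have : -(10*m) ≤ 2*m - b*(A+2*m+B - b + b^2) + 2*(b*A) := by
      linarith [mul_nonneg hb0.le hApos.le]
    linarith [hcA, this]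
  have hεA := mul_pos hε0 hApos
  have hεAb : (ε*A)*b ≤ (ε*A)*(1/100) := mul_le_mul_of_nonneg_left hb100 hεA.le
  have hεAb0 : 0 ≤ ε*A*b := by positivity
  have hcdu : c - A ≤ (ε/100)*A := by
    refine le_of_mul_le_mul_right ?_ h2b
    linarith [hNu, hεAb, hεAb0]
  have hcdl : -((ε/100)*A) ≤ c - A := by
    refine le_of_mul_le_mul_right ?_ h2b
    linarith [hNl, hεAb, hεAb0]
  have hcpos : 0 < c := by linarith
  -- the (E2) bounds
  have hb2small : b^2 ≤ (ε/8000)*A := by linarith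
  have hεsqA : ε^2*A ≤ (1/2)*(ε*A) := by
    have : ε^2 ≤ (1/2)*ε := by
      have h := mul_le_mul_of_nonneg_left hε1 hε0.le
      linarith [h]
    calc ε^2*A ≤ ((1/2)*ε)*A := mul_le_mul_of_nonneg_right this hApos.le
      _ = (1/2)*(ε*A) := by ring
  have hE2l : 4 * (1 - ε) ^ 2 * A ≤ 4 * c - b ^ 2 := by
    linarith [hcdl, hb2small, hεsqA, hεA.le]
  have hE2u : 4 * c - b ^ 2 ≤ 4 * (1 + ε) ^ 2 * A := by
    linarith [hcdu, sq_nonneg b, mul_nonneg (mul_nonneg hε0.le hε0.le) hApos.le, hεA.le]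
  -- e facts
  have hepos : 0 < e := by
    have he_eq : e = 2*m*B/c := by
      rw [eq_div_iff hcpos.ne']
      linear_combination hce
    rw [he_eq]; positivity
  have hec1 : e*(A - (ε/100)*A) ≤ e*c := mul_le_mul_of_nonneg_left (by linarith) hepos.le
  have hec2 : e*c ≤ e*(A + (ε/100)*A) := mul_le_mul_of_nonneg_left (by linarith) hepos.le
  rw [show e*c = 2*m*B by linear_combination hce] at hec1 hec2
  have hεeA : ε*(e*A) ≤ (1/2)*(e*A) :=
    mul_le_mul_of_nonneg_right hε1 (mul_nonneg hepos.le hApos.le)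
  have heA3 : e*A ≤ 3*(m*B) := by linarith [hec1, hεeA, (mul_pos hmpos hBpos).le]
  have hεeA3 : ε*(e*A) ≤ ε*(3*(m*B)) := by
    apply mul_le_mul_of_nonneg_left heA3 hε0.le
  have hεmB : 0 ≤ ε*(m*B) := by positivity
  have heu : e*A ≤ 2*(m*B) + (ε/25)*(m*B) := by linarith [hec1, hεeA3, hεmB]
  have hel : 2*(m*B) - (ε/25)*(m*B) ≤ e*A := by linarith [hec2, hεeA3, hεmB]
  -- e is small: e ≤ 3ε/100
  have heε : e ≤ 3*(ε/100) := by
    have e2 : e*A ≤ (3*(ε/100))*A := by linarith [heA3]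
    exact le_of_mul_le_mul_right e2 hApos
  have he150 : e ≤ 1/50 := by linarith
  -- discriminant
  have hdisc : 0 < (1-b)^2 - 4*e := by linarith [sq_nonneg b, he150, hb100]
  set R := Real.sqrt ((1-b)^2 - 4*e) with hR_def
  have hR2 : R^2 = (1-b)^2 - 4*e := Real.sq_sqrt hdisc.le
  have hR0 : 0 ≤ R := Real.sqrt_nonneg _
  have hRled : R ≤ 1-b := by
    have h1 : (1-b)^2 - 4*e ≤ (1-b)^2 := by linarith
    have h2 := Real.sqrt_le_sqrt h1
    rwa [Real.sqrt_sq (by linarith : (0:ℝ) ≤ 1-b)] at h2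
  have hRge : 1-b-5*e ≤ R := by
    have h0 : 0 ≤ 1-b-5*e := by linarith
    have pe2 : e*b ≤ e*(1/100) := mul_le_mul_of_nonneg_left hb100 hepos.le
    have pe1 : e*e ≤ e*(1/50) := mul_le_mul_of_nonneg_left he150 hepos.le
    have h1 : (1-b-5*e)^2 ≤ (1-b)^2 - 4*e := by linarith [pe1, pe2, hepos.le]
    exact (Real.le_sqrt h0 hdisc.le).mpr h1
  refine ⟨c, (-(1-b) + R)/2, (-(1-b) - R)/2, ?_, ?_, ?_, by ring, hE2l, hE2u, ?_, ?_⟩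
  · have hprod : ((-(1-b) + R)/2) * ((-(1-b) - R)/2) = e := by
      linear_combination (-(1:ℝ)/4) * hR2
    rw [hprod]; exact hv2
  · have hprod : ((-(1-b) + R)/2) * ((-(1-b) - R)/2) = e := by
      linear_combination (-(1:ℝ)/4) * hR2
    rw [hprod]; linarith [hv3]
  · have hprod : ((-(1-b) + R)/2) * ((-(1-b) - R)/2) = e := by
      linear_combination (-(1:ℝ)/4) * hR2
    rw [hprod]; exact hce
  · -- x3 bound
    set w := (m*B)/A with hw_def
    have hwA : w*A = m*B := div_mul_cancel₀ _ hApos.ne'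
    have hw0 : 0 ≤ w := by positivity
    have hgoal_eq : 2*(m*B)/A = 2*w := by rw [hw_def]; ring
    rw [hgoal_eq]
    -- D := 1-b-R satisfies D*((1-b)+R) = 4e
    have hkey : (1-b-R)*((1-b)+R) = 4*e := by linear_combination -hR2
    have hD0 : 0 ≤ 1-b-R := by linarith
    have hsum2 : (1-b)+R ≤ 2 := by linarith
    have hDl : 2*e ≤ 1-b-R := by
      have h1 : (1-b-R)*((1-b)+R) ≤ (1-b-R)*2 := mul_le_mul_of_nonneg_left hsum2 hD0
      linarith [hkey]
    have hsum3 : 2 - (19*ε/100) ≤ (1-b)+R := by linarith [hRge, hbε, heε]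
    have hD4e : 1-b-R ≤ 4*e := by
      have h1 : (1-b-R)*1 ≤ (1-b-R)*((1-b)+R) := by
        apply mul_le_mul_of_nonneg_left _ hD0
        linarith
      linarith [hkey]
    have hDu : 1-b-R ≤ 2*e + (19*ε/100)*(4*e) := by
      have h1 : (1-b-R)*(2 - 19*ε/100) ≤ (1-b-R)*((1-b)+R) :=
        mul_le_mul_of_nonneg_left hsum3 hD0
      have h2 : (19*ε/100)*(1-b-R) ≤ (19*ε/100)*(4*e) :=
        mul_le_mul_of_nonneg_left hD4e (by positivity)
      linarith [hkey, h1, h2]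
    -- e vs w
    have hew_u : e ≤ 2*w + (ε/25)*w := by
      have e2 : e*A ≤ (2*w + (ε/25)*w)*A := by
        have : (2*w + (ε/25)*w)*A = 2*(w*A) + (ε/25)*(w*A) := by ring
        rw [this, hwA]; linarith [heu]
      exact le_of_mul_le_mul_right e2 hApos
    have hew_l : 2*w - (ε/25)*w ≤ e := by
      have e2 : (2*w - (ε/25)*w)*A ≤ e*A := by
        have : (2*w - (ε/25)*w)*A = 2*(w*A) - (ε/25)*(w*A) := by ring
        rw [this, hwA]; linarith [hel]
      exact le_of_mul_le_mul_right e2 hApos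
    have hεw2 : ε*w ≤ (1/2)*w := mul_le_mul_of_nonneg_right hε1 hw0
    have he3w : e ≤ 3*w := by linarith [hew_u, hεw2, hw0]
    have hεe3w : ε*e ≤ ε*(3*w) := mul_le_mul_of_nonneg_left he3w hε0.le
    rw [abs_le]
    constructor
    · -- -(ε*(2*w)) ≤ x3 + 2*w,  x3 = -(1-b-R)/2
      have : (-(1-b) + R)/2 = -((1-b-R)/2) := by ring
      rw [this]
      linarith [hDu, hεe3w, hew_u, mul_nonneg hε0.le hw0]
    · have : (-(1-b) + R)/2 = -((1-b-R)/2) := by ring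
      rw [this]
      linarith [hDl, hew_l, mul_nonneg hε0.le hw0]
  · -- x4 bound
    rw [abs_le]
    constructor
    · linarith [hRled, hb0.le]
    · linarith [hRge, hbε, heε]

lemma core_exists (ε A B m : ℝ) (hε0 : 0 < ε) (hε1 : ε ≤ 1/2)
    (hm : 1 ≤ m) (hB1 : 1 ≤ B) (hBm : B ≤ m) (hmA : m ≤ A)
    (hsmall : 100 * (m * B) ≤ ε * A) (hbig : 8000 * m ≤ ε * A) :
    ∃ b c x3 x4 : ℝ,
      c + x3 * x4 + b * (1 - b) = A + 2 * m + B ∧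
      b * (x3 * x4) + c * (1 - b) = A + 2 * m ∧
      c * (x3 * x4) = 2 * m * B ∧
      x3 + x4 = -(1 - b) ∧
      |b - B / A| ≤ ε * (B / A) ∧
      4 * (1 - ε) ^ 2 * A ≤ 4 * c - b ^ 2 ∧
      4 * c - b ^ 2 ≤ 4 * (1 + ε) ^ 2 * A ∧
      |x3 + 2 * (m * B) / A| ≤ ε * (2 * (m * B) / A) ∧
      |x4 + 1| ≤ ε := by
  have hApos : 0 < A := lt_of_lt_of_le one_pos (hm.trans hmA)
  have hmpos : 0 < m := lt_of_lt_of_le one_pos hm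
  have hBpos : 0 < B := lt_of_lt_of_le one_pos hB1
  have hmB1 : m*B ≤ m*B := le_rfl
  have hAbig : 8000 ≤ ε * A := le_trans (by linarith) hbig
  have hεA2 : ε*A ≤ (1/2)*A := mul_le_mul_of_nonneg_right hε1 hApos.le
  have hmA' : 16000 * m ≤ A := by linarith
  set s := B / A with hs_def
  have hsA : s * A = B := div_mul_cancel₀ B hApos.ne'
  have hspos : 0 < s := div_pos hBpos hApos
  have hsle : s ≤ ε / 100 := by
    have h1 : 100*B ≤ ε*A := by
      linarith [mul_le_mul_of_nonneg_right hm hBpos.le, hsmall]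
    have h2 : s * (100*A) ≤ (ε/100) * (100*A) := by
      calc s*(100*A) = 100*(s*A) := by ring
        _ = 100*B := by rw [hsA]
        _ ≤ ε*A := h1
        _ = (ε/100)*(100*A) := by ring
    exact le_of_mul_le_mul_right h2 (by linarith)
  have hs200 : s ≤ 1/200 := by linarith
  set F : ℝ → ℝ := fun b =>
    (A+2*m - b*(A+2*m+B - b + b^2)) * ((1-b)*(A+2*m+B - b + b^2) - (A+2*m))
      - (2*m*B)*(1-2*b)^2 with hF_def
  have hcont : ContinuousOn F (Set.Icc ((1-ε/8)*s) ((1+ε/8)*s)) := by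
    apply Continuous.continuousOn
    rw [hF_def]; fun_prop
  have hts : 0 ≤ (ε/8)*s := by positivity
  have hts2 : (ε/8)*s ≤ (1/16)*s := mul_le_mul_of_nonneg_right (by linarith) hspos.le
  have hlb : (1-ε/8)*s ≤ (1+ε/8)*s := by linarith [hts]
  have hb0l : 0 < (1-ε/8)*s := mul_pos (by linarith) hspos
  have hb0u : 0 < (1+ε/8)*s := mul_pos (by linarith) hspos
  have hb100u : (1+ε/8)*s ≤ 1/100 := by linarith [hts2, hs200]
  have hupperA : ((1+ε/8)*s)*A = (1+ε/8)*B := by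
    calc ((1+ε/8)*s)*A = (1+ε/8)*(s*A) := by ring
      _ = (1+ε/8)*B := by rw [hsA]
  have hlowerA : ((1-ε/8)*s)*A = (1-ε/8)*B := by
    calc ((1-ε/8)*s)*A = (1-ε/8)*(s*A) := by ring
      _ = (1-ε/8)*B := by rw [hsA]
  have hneg : F ((1+ε/8)*s) < 0 := by
    have := upper_sign ε A B m ((1+ε/8)*s) hε0 hε1 hm hB1 hBm hmA'
      hb0u hb100u hupperA
    simpa only [hF_def] using this
  have hpos : 0 < F ((1-ε/8)*s) := by
    have := lower_sign ε A B m ((1-ε/8)*s) hε0 hε1 hm hB1 hBm hmA' hAbig hbig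
      hb0l (by linarith [hts, hs200] : (1-ε/8)*s ≤ 1/100) hlowerA
    simpa only [hF_def] using this
  have hmem : (0:ℝ) ∈ Set.Icc (F ((1+ε/8)*s)) (F ((1-ε/8)*s)) := ⟨hneg.le, hpos.le⟩
  obtain ⟨b, hbmem, hFb0⟩ := intermediate_value_Icc' hlb hcont hmem
  obtain ⟨hbl, hbu⟩ := hbmem
  have hb0 : 0 < b := lt_of_lt_of_le hb0l hbl
  have hb100 : b ≤ 1/100 := hbu.trans hb100u
  have hblA : (1-ε/8)*B ≤ b*A := by
    have := mul_le_mul_of_nonneg_right hbl hApos.le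
    rwa [hlowerA] at this
  have hbuA : b*A ≤ (1+ε/8)*B := by
    have := mul_le_mul_of_nonneg_right hbu hApos.le
    rwa [hupperA] at this
  have hFb : (A+2*m - b*(A+2*m+B - b + b^2)) * ((1-b)*(A+2*m+B - b + b^2) - (A+2*m))
      = (2*m*B)*(1-2*b)^2 := by
    have h := hFb0
    simp only [hF_def] at h
    linarith
  obtain ⟨c, x3, x4, h1, h2, h3, h4, h5, h6, h7, h8⟩ :=
    build ε A B m b hε0 hε1 hm hB1 hBm hmA' hAbig hbig hsmall hb0 hb100 hblA hbuA hFb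
  refine ⟨b, c, x3, x4, h1, h2, h3, h4, ?_, h5, h6, h7, h8⟩
  rw [abs_le]
  have hεs : (ε/8)*s ≤ ε*s := by
    have := mul_nonneg hε0.le hspos.le
    linarith
  constructor <;> [skip; skip] <;> linarith [hbl, hbu, hεs, hts]

/-- For `α, β ∈ [0,1]` with `α > (β+1)/2`, as `μ → ∞` the quartic
`λ⁴ + λ³ + (μ^{2α}+2μ+μ^β)λ² + (μ^{2α}+2μ)λ + 2μ^{1+β}` has a pair of complex
conjugate roots `λ_{1,2} = −(1/2)μ^{β−2α}(1+o(1)) ± iμ^α(1+o(1))`, a real root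
`λ₃ = −2μ^{−2α+β+1}(1+o(1))`, and a real root `λ₄ = −1+o(1)`. -/
theorem quartic_roots_no_inertia (α β : ℝ)
    (hα : α ∈ Set.Icc (0:ℝ) 1) (hβ : β ∈ Set.Icc (0:ℝ) 1) (hQ : (β + 1) / 2 < α) :
    ∀ ε > (0:ℝ), ∃ M : ℝ, ∀ μ : ℝ, M < μ →
      ∃ l1 l3 l4 : ℂ,
        quarticNoInertia α β μ l1 = 0 ∧
        quarticNoInertia α β μ (starRingEnd ℂ l1) = 0 ∧
        quarticNoInertia α β μ l3 = 0 ∧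
        quarticNoInertia α β μ l4 = 0 ∧
        -- `λ₁ = −(1/2)μ^{β−2α}(1+o(1)) + iμ^α(1+o(1))` (and `λ₂ = conj λ₁`)
        |l1.re - (-(1 / 2) * μ ^ (β - 2 * α))| ≤ ε * ((1 / 2) * μ ^ (β - 2 * α)) ∧
        |l1.im - μ ^ α| ≤ ε * μ ^ α ∧
        -- `λ₃ = −2μ^{−2α+β+1}(1+o(1))` is real
        l3.im = 0 ∧
        |l3.re - (-2 * μ ^ (-(2 * α) + β + 1))| ≤ ε * (2 * μ ^ (-(2 * α) + β + 1)) ∧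
        -- `λ₄ = −1 + o(1)` is real
        l4.im = 0 ∧ |l4.re - (-1)| ≤ ε := by
  obtain ⟨hα0, hα1⟩ := hα
  obtain ⟨hβ0, hβ1⟩ := hβ
  intro ε hεpos
  set ε' := min ε (1/2) with hε'_def
  have hε'0 : 0 < ε' := lt_min hεpos (by norm_num)
  have hε'2 : ε' ≤ 1/2 := min_le_right _ _
  have hε'ε : ε' ≤ ε := min_le_left _ _
  have hc1 : (0:ℝ) < 2*α - β - 1 := by linarith
  have hc2 : (0:ℝ) < 2*α - 1 := by linarith
  have E1 : ∀ᶠ μ:ℝ in Filter.atTop, μ ^ (-(2*α - β - 1)) < ε'/100 :=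
    (tendsto_rpow_neg_atTop hc1).eventually (gt_mem_nhds (by positivity))
  have E2 : ∀ᶠ μ:ℝ in Filter.atTop, μ ^ (-(2*α - 1)) < ε'/8000 :=
    (tendsto_rpow_neg_atTop hc2).eventually (gt_mem_nhds (by positivity))
  have E3 : ∀ᶠ μ:ℝ in Filter.atTop, (1:ℝ) ≤ μ := Filter.eventually_ge_atTop 1
  obtain ⟨M, hM⟩ := Filter.eventually_atTop.mp ((E1.and E2).and E3)
  refine ⟨M, fun μ hμ => ?_⟩
  obtain ⟨⟨hsm1, hsm2⟩, hμ1⟩ := hM μ hμ.le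
  have hμ0 : (0:ℝ) < μ := by linarith
  set A := μ ^ (2*α) with hA_def
  set B := μ ^ β with hB_def
  have hApos : 0 < A := Real.rpow_pos_of_pos hμ0 _
  have hBpos : 0 < B := Real.rpow_pos_of_pos hμ0 _
  have hB1 : 1 ≤ B := by
    have h := Real.rpow_le_rpow_of_exponent_le hμ1 hβ0
    rwa [Real.rpow_zero] at h
  have hBm : B ≤ μ := by
    have h := Real.rpow_le_rpow_of_exponent_le hμ1 hβ1
    rwa [Real.rpow_one] at h
  have hmA : μ ≤ A := by
    have h := Real.rpow_le_rpow_of_exponent_le hμ1 (by linarith : (1:ℝ) ≤ 2*α)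
    rwa [Real.rpow_one] at h
  have key1 : μ * B = A * μ ^ (-(2*α - β - 1)) := by
    rw [hB_def, hA_def, ← Real.rpow_add hμ0,
      show 2*α + -(2*α - β - 1) = β + 1 by ring, Real.rpow_add hμ0, Real.rpow_one]
    ring
  have key2 : μ = A * μ ^ (-(2*α - 1)) := by
    rw [hA_def, ← Real.rpow_add hμ0, show 2*α + -(2*α - 1) = 1 by ring, Real.rpow_one]
  have hsmall : 100 * (μ * B) ≤ ε' * A := by
    calc 100 * (μ * B) = 100 * (A * μ ^ (-(2*α - β - 1))) := by rw [key1]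
      _ ≤ 100 * (A * (ε'/100)) := by
          apply mul_le_mul_of_nonneg_left
            (mul_le_mul_of_nonneg_left hsm1.le hApos.le) (by norm_num)
      _ = ε' * A := by ring
  have hbig : 8000 * μ ≤ ε' * A := by
    calc 8000 * μ = 8000 * (A * μ ^ (-(2*α - 1))) := by rw [← key2]
      _ ≤ 8000 * (A * (ε'/8000)) := by
          apply mul_le_mul_of_nonneg_left
            (mul_le_mul_of_nonneg_left hsm2.le hApos.le) (by norm_num)
      _ = ε' * A := by ring
  obtain ⟨b, c, x3, x4, hv2, hv3, hv4, hv1, hbB, hE2l, hE2u, hx3, hx4⟩ :=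
    core_exists ε' A B μ hε'0 hε'2 hμ1 hB1 hBm hmA hsmall hbig
  have hdiscn : 0 ≤ 4*c - b^2 := by
    refine le_trans ?_ hE2l
    have h1 : (0:ℝ) ≤ (1-ε')^2 := sq_nonneg _
    positivity
  set T := Real.sqrt (4*c - b^2) with hT_def
  have hT0 : 0 ≤ T := Real.sqrt_nonneg _
  have hT2 : T^2 = 4*c - b^2 := Real.sq_sqrt hdiscn
  have hμ1β : μ ^ ((1:ℝ)+β) = μ * B := by
    rw [Real.rpow_add hμ0, Real.rpow_one, hB_def]
  -- the factorization over ℂ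
  have C1 : (x3:ℂ) + (x4:ℂ) = -(1 - (b:ℂ)) := by exact_mod_cast hv1
  have C2 : (c:ℂ) + (x3:ℂ)*(x4:ℂ) + (b:ℂ)*(1 - (b:ℂ)) = (A:ℂ) + 2*(μ:ℂ) + (B:ℂ) := by
    exact_mod_cast hv2
  have C3 : (b:ℂ)*((x3:ℂ)*(x4:ℂ)) + (c:ℂ)*(1 - (b:ℂ)) = (A:ℂ) + 2*(μ:ℂ) := by
    exact_mod_cast hv3
  have C4 : (c:ℂ)*((x3:ℂ)*(x4:ℂ)) = 2*(μ:ℂ)*(B:ℂ) := by exact_mod_cast hv4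
  have hfac : ∀ z : ℂ, quarticNoInertia α β μ z
      = (z^2 + (b:ℂ)*z + (c:ℂ)) * ((z - (x3:ℂ)) * (z - (x4:ℂ))) := by
    intro z
    rw [quarticNoInertia, hμ1β]
    rw [show ((μ ^ (2*α) + 2*μ + μ^β : ℝ) : ℂ) = (A:ℂ) + 2*(μ:ℂ) + (B:ℂ) by
      rw [← hA_def, ← hB_def]; push_cast; ring]
    rw [show ((μ ^ (2*α) + 2*μ : ℝ) : ℂ) = (A:ℂ) + 2*(μ:ℂ) by
      rw [← hA_def]; push_cast; ring]
    rw [show ((2 * (μ*B) : ℝ) : ℂ) = 2*(μ:ℂ)*(B:ℂ) by push_cast; ring]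
    linear_combination (z^3 + (b:ℂ)*z^2 + (c:ℂ)*z) * C1 - z^2 * C2 - z * C3 - C4
  -- the complex quadratic root
  set l1 : ℂ := (((-b/2 : ℝ)) : ℂ) + (((T/2 : ℝ)) : ℂ) * Complex.I with hl1_def
  have hT2C : ((T:ℝ):ℂ)^2 = 4*(c:ℂ) - (b:ℂ)^2 := by exact_mod_cast hT2
  have hquad : l1^2 + (b:ℂ)*l1 + (c:ℂ) = 0 := by
    rw [hl1_def]
    push_cast
    linear_combination (((T:ℝ):ℂ)^2/4) * Complex.I_sq - (1/4) * hT2C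
  have hroot1 : quarticNoInertia α β μ l1 = 0 := by
    rw [hfac l1, hquad, zero_mul]
  have hconj : quarticNoInertia α β μ (starRingEnd ℂ l1) = 0 := by
    have h : quarticNoInertia α β μ (starRingEnd ℂ l1)
        = starRingEnd ℂ (quarticNoInertia α β μ l1) := by
      simp [quarticNoInertia, map_add, map_mul, map_pow, Complex.conj_ofReal, map_ofNat]
    rw [h, hroot1, map_zero]
  have hroot3 : quarticNoInertia α β μ ((x3:ℝ):ℂ) = 0 := by
    rw [hfac]; simp
  have hroot4 : quarticNoInertia α β μ ((x4:ℝ):ℂ) = 0 := by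
    rw [hfac]; simp
  refine ⟨l1, ((x3:ℝ):ℂ), ((x4:ℝ):ℂ), hroot1, hconj, hroot3, hroot4, ?_, ?_, ?_, ?_, ?_, ?_⟩
  · -- real part of l1
    have hre : l1.re = -b/2 := by
      rw [hl1_def]; simp
    rw [hre]
    have hβ2α : μ ^ (β - 2*α) = B / A := by
      rw [Real.rpow_sub hμ0]
    rw [hβ2α]
    have hBA0 : 0 ≤ B/A := by positivity
    have hεBA : ε' * (B/A) ≤ ε * (B/A) := mul_le_mul_of_nonneg_right hε'ε hBA0
    rw [abs_le] at hbB ⊢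
    obtain ⟨u1, u2⟩ := hbB
    constructor <;> linarith [hεBA]
  · -- imaginary part of l1
    have him : l1.im = T/2 := by
      rw [hl1_def]; simp
    rw [him]
    have hsqA : Real.sqrt A = μ ^ α := by
      rw [show A = (μ^α)^2 by
        rw [hA_def, pow_two, ← Real.rpow_add hμ0]; congr 1; ring]
      exact Real.sqrt_sq (Real.rpow_nonneg hμ0.le α)
    rw [← hsqA]
    have hsA0 : 0 ≤ Real.sqrt A := Real.sqrt_nonneg _
    have hTu : T ≤ 2*(1+ε')*Real.sqrt A := by
      have h1 : T ≤ Real.sqrt (4*(1+ε')^2*A) := Real.sqrt_le_sqrt hE2u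
      have h2 : Real.sqrt (4*(1+ε')^2*A) = 2*(1+ε')*Real.sqrt A := by
        rw [show 4*(1+ε')^2*A = (2*(1+ε'))^2 * A by ring,
          Real.sqrt_mul (by positivity), Real.sqrt_sq (by positivity)]
      rw [h2] at h1; exact h1
    have hTl : 2*(1-ε')*Real.sqrt A ≤ T := by
      have h0 : 0 ≤ 2*(1-ε')*Real.sqrt A := by
        apply mul_nonneg (by linarith) hsA0
      rw [hT_def]
      refine (Real.le_sqrt h0 hdiscn).mpr ?_
      have h3 : (2*(1-ε')*Real.sqrt A)^2 = 4*(1-ε')^2*(Real.sqrt A ^ 2) := by ring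
      rw [h3, Real.sq_sqrt hApos.le]
      exact hE2l
    have hεsA : ε' * Real.sqrt A ≤ ε * Real.sqrt A := mul_le_mul_of_nonneg_right hε'ε hsA0
    rw [abs_le]
    constructor <;> linarith [hTl, hTu, hεsA, hsA0]
  · simp
  · -- l3 bound
    rw [show (((x3:ℝ):ℂ)).re = x3 from Complex.ofReal_re x3]
    have hμ3 : μ ^ (-(2*α)+β+1) = (μ*B)/A := by
      rw [eq_div_iff hApos.ne', hA_def, ← Real.rpow_add hμ0,
        show -(2*α)+β+1 + 2*α = 1 + β by ring, hμ1β]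
    rw [hμ3]
    rw [show x3 - -2*(μ*B/A) = x3 + 2*(μ*B)/A by ring,
      show ε*(2*(μ*B/A)) = ε*(2*(μ*B)/A) by ring]
    refine le_trans hx3 (mul_le_mul_of_nonneg_right hε'ε (by positivity))
  · simp
  · rw [show (((x4:ℝ):ℂ)).re = x4 from Complex.ofReal_re x4, sub_neg_eq_add]
    exact le_trans hx4 hε'ε
end
end

section
/- For the complex root pair λ_{1,2}(μ) of the quartic (μ^γ+1)λ⁴ + (μ^γ+1)λ³ + (μ^{2α}+μ^{β+γ}+2μ+μ^β)λ² + (μ^{2α}+2μ)λ + 2μ^{1+β} (with α > (β+1)/2, γ ∈ (0,1]), as μ → ∞ one has |Re λ_i(μ)| = (1/2)|Im λ_i(μ)|^{-k}(1+o(1)) with k = 2(2α − β − γ)/(2α − γ). -/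
open Complex Filter

noncomputable section

/-- For the complex conjugate root pair
`λ(μ) = −(1/2)μ^{−2α+β+γ}(1+o(1)) ± iμ^{α−γ/2}(1+o(1))` of the characteristic
quartic of the thermoelastic system with inertial term (`m = 1`, `σ = 2`, `τ = 1`),
as `μ → ∞` one has `|Re λ(μ)| = (1/2)|Im λ(μ)|^{−k}(1+o(1))` with
`k = 2(2α − β − γ)/(2α − γ)`. -/
theorem root_pair_exponent_relation_inertia (α β γ : ℝ)
    (hα : α ∈ Set.Icc (0:ℝ) 1) (hβ : β ∈ Set.Icc (0:ℝ) 1) (hγ : γ ∈ Set.Ioc (0:ℝ) 1)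
    (hQ : (β + 1) / 2 < α)
    (lam : ℝ → ℂ)
    -- `Re λ(μ) = −(1/2)μ^{−2α+β+γ}(1+o(1))`
    (hre : ∀ ε > (0:ℝ), ∃ M : ℝ, ∀ μ : ℝ, M < μ →
      |(lam μ).re - (-(1 / 2) * μ ^ (-(2 * α) + β + γ))|
        ≤ ε * ((1 / 2) * μ ^ (-(2 * α) + β + γ)))
    -- `Im λ(μ) = ±μ^{α−γ/2}(1+o(1))`; take the branch `Im λ(μ) = μ^{α−γ/2}(1+o(1))`
    (him : ∀ ε > (0:ℝ), ∃ M : ℝ, ∀ μ : ℝ, M < μ →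
      |(lam μ).im - μ ^ (α - γ / 2)| ≤ ε * μ ^ (α - γ / 2)) :
    Tendsto (fun μ : ℝ => |(lam μ).re| /
        ((1 / 2) * |(lam μ).im| ^ (-(2 * (2 * α - β - γ) / (2 * α - γ)))))
      atTop (nhds 1) := by
  set a : ℝ := -(2 * α) + β + γ with ha
  set b : ℝ := α - γ / 2 with hbdef
  set k : ℝ := 2 * (2 * α - β - γ) / (2 * α - γ) with hk
  have hγ1 : γ ≤ 1 := hγ.2
  have hβ0 : 0 ≤ β := hβ.1
  have h2αγ : 0 < 2 * α - γ := by nlinarith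
  have hb : 0 < b := by simp only [hbdef]; nlinarith
  have habk : a + b * k = 0 := by
    simp only [ha, hbdef, hk]
    field_simp
    ring
  have F : Tendsto (fun μ : ℝ => -(lam μ).re / ((1 / 2) * μ ^ a)) atTop (nhds 1) := by
    rw [Metric.tendsto_atTop]
    intro ε hε
    obtain ⟨M, hM⟩ := hre (ε / 2) (by positivity)
    refine ⟨max (M + 1) 1, fun μ hμ => ?_⟩
    have hμM : M < μ := lt_of_lt_of_le (lt_add_one M) (le_trans (le_max_left _ _) hμ)
    have hμ0 : 0 < μ := lt_of_lt_of_le one_pos (le_trans (le_max_right _ _) hμ)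
    have hra : 0 < μ ^ a := Real.rpow_pos_of_pos hμ0 a
    have hc : 0 < (1 / 2) * μ ^ a := by positivity
    have h := hM μ hμM
    rw [Real.dist_eq]
    have key : -(lam μ).re / ((1 / 2) * μ ^ a) - 1
        = -((lam μ).re - (-(1 / 2) * μ ^ a)) / ((1 / 2) * μ ^ a) := by
      field_simp
      ring
    rw [key, abs_div, abs_neg, abs_of_pos hc, div_lt_iff₀ hc]
    calc |(lam μ).re - (-(1 / 2) * μ ^ a)| ≤ ε / 2 * ((1 / 2) * μ ^ a) := h
      _ < ε * ((1 / 2) * μ ^ a) := by nlinarith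
  have G : Tendsto (fun μ : ℝ => (lam μ).im / μ ^ b) atTop (nhds 1) := by
    rw [Metric.tendsto_atTop]
    intro ε hε
    obtain ⟨M, hM⟩ := him (ε / 2) (by positivity)
    refine ⟨max (M + 1) 1, fun μ hμ => ?_⟩
    have hμM : M < μ := lt_of_lt_of_le (lt_add_one M) (le_trans (le_max_left _ _) hμ)
    have hμ0 : 0 < μ := lt_of_lt_of_le one_pos (le_trans (le_max_right _ _) hμ)
    have hc : 0 < μ ^ b := Real.rpow_pos_of_pos hμ0 b
    have h := hM μ hμM
    rw [Real.dist_eq]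
    have key : (lam μ).im / μ ^ b - 1 = ((lam μ).im - μ ^ b) / μ ^ b := by
      field_simp
    rw [key, abs_div, abs_of_pos hc, div_lt_iff₀ hc]
    calc |(lam μ).im - μ ^ b| ≤ ε / 2 * μ ^ b := h
      _ < ε * μ ^ b := by nlinarith
  have hev : ∀ᶠ μ : ℝ in atTop,
      |(lam μ).re| / ((1 / 2) * |(lam μ).im| ^ (-k))
        = (-(lam μ).re / ((1 / 2) * μ ^ a)) * ((lam μ).im / μ ^ b) ^ k := by
    have hF' : ∀ᶠ μ : ℝ in atTop, (1 / 2 : ℝ) < -(lam μ).re / ((1 / 2) * μ ^ a) :=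
      F.eventually (eventually_gt_nhds (by norm_num))
    have hG' : ∀ᶠ μ : ℝ in atTop, (1 / 2 : ℝ) < (lam μ).im / μ ^ b :=
      G.eventually (eventually_gt_nhds (by norm_num))
    filter_upwards [hF', hG', eventually_gt_atTop (0 : ℝ)] with μ hFμ hGμ hμ0
    have hra : 0 < μ ^ a := Real.rpow_pos_of_pos hμ0 a
    have hca : 0 < (1 / 2) * μ ^ a := by positivity
    have hcb : 0 < μ ^ b := Real.rpow_pos_of_pos hμ0 b
    have hreneg : 0 < -(lam μ).re := by
      have h1 := mul_pos (lt_trans one_half_pos hFμ) hca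
      rwa [div_mul_cancel₀ _ (ne_of_gt hca)] at h1
    have himpos : 0 < (lam μ).im := by
      have h1 := mul_pos (lt_trans one_half_pos hGμ) hcb
      rwa [div_mul_cancel₀ _ (ne_of_gt hcb)] at h1
    rw [abs_of_neg (by linarith : (lam μ).re < 0), abs_of_pos himpos]
    rw [Real.div_rpow (le_of_lt himpos) (le_of_lt hcb)]
    rw [← Real.rpow_mul (le_of_lt hμ0)]
    rw [Real.rpow_neg (le_of_lt himpos)]
    have hbk : μ ^ (b * k) = (μ ^ a)⁻¹ := by
      have h1 : μ ^ (b * k) * μ ^ a = 1 := by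
        rw [← Real.rpow_add hμ0, add_comm, habk, Real.rpow_zero]
      exact eq_inv_of_mul_eq_one_left h1
    rw [hbk]
    have hA : 0 < (lam μ).im ^ k := Real.rpow_pos_of_pos himpos k
    field_simp
  have lim : Tendsto (fun μ : ℝ =>
      (-(lam μ).re / ((1 / 2) * μ ^ a)) * ((lam μ).im / μ ^ b) ^ k) atTop (nhds 1) := by
    have := F.mul (G.rpow_const (p := k) (Or.inl one_ne_zero))
    simpa using this
  exact lim.congr' (hev.mono fun μ h => h.symm)
end
end

section
/- Let (T(t)) be a bounded C₀-semigroup with generator A on a Hilbert space, and suppose ‖T(t)A(I − A)^{-2}‖ = O(t^{-1/a}) as t → ∞ for some a ≥ 1, with σ(A) ∩ iℝ ⊆ {0}. Then ‖(is − A)^{-1}‖ = O(|s|^{-a}) as s → 0 and ‖(is − A)^{-1}‖ = O(|s|^{a}) as |s| → ∞. -/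
open Complex Filter

noncomputable section

/-- `R` is the bounded resolvent operator `(zI − A)⁻¹` of the (unbounded, partially
defined) operator `A` at the point `z`; its existence means `z` belongs to the
resolvent set `ρ(A)`. -/
def IsResolventAt {H : Type*} [NormedAddCommGroup H] [InnerProductSpace ℂ H]
    (A : H →ₗ.[ℂ] H) (z : ℂ) (R : H →L[ℂ] H) : Prop :=
  (∀ y : H, ∃ h : R y ∈ A.domain, z • R y - A ⟨R y, h⟩ = y) ∧
  ∀ x : A.domain, R (z • (x : H) - A x) = (x : H)

section BCTAux

open MeasureTheory intervalIntegral Set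

set_option linter.unusedSectionVars false
set_option maxHeartbeats 1000000

variable {H : Type*} [NormedAddCommGroup H] [InnerProductSpace ℂ H] [CompleteSpace H]

lemma bct_smul_real (x : ℝ) (v : H) : x • v = (x:ℂ) • v := by
  rw [← smul_one_smul ℂ x v, Complex.real_smul, mul_one]

lemma bct_contOn (T : ℝ → H →L[ℂ] H) (M : ℝ)
    (hT : ∀ t ≥ (0:ℝ), ‖T t‖ ≤ M)
    (hsemi : ∀ s ≥ (0:ℝ), ∀ t ≥ (0:ℝ), T (s + t) = (T s).comp (T t))
    (h0 : T 0 = ContinuousLinearMap.id ℂ H)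
    (hc : ∀ x : H, ContinuousWithinAt (fun t => T t x) (Set.Ici 0) 0) (y : H) :
    ContinuousOn (fun r => T r y) (Set.Ici 0) := by
  intro r₀ hr₀
  simp only [Set.mem_Ici] at hr₀
  have key : ∀ r ∈ Set.Ici (0:ℝ), ‖T r y - T r₀ y‖ ≤ M * ‖T |r - r₀| y - y‖ := by
    intro r hr
    simp only [Set.mem_Ici] at hr
    rcases le_total r₀ r with h | h
    · have he : T r = (T r₀).comp (T (r - r₀)) := by
        rw [← hsemi r₀ hr₀ (r - r₀) (by linarith)]; congr 1; ring
      rw [_root_.abs_of_nonneg (by linarith : (0:ℝ) ≤ r - r₀), he]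
      calc ‖((T r₀).comp (T (r - r₀))) y - T r₀ y‖ = ‖(T r₀) (T (r-r₀) y - y)‖ := by
            rw [ContinuousLinearMap.comp_apply, ← map_sub]
        _ ≤ ‖T r₀‖ * ‖T (r-r₀) y - y‖ := (T r₀).le_opNorm _
        _ ≤ M * ‖T (r-r₀) y - y‖ := by gcongr; exact hT r₀ hr₀
    · have he : T r₀ = (T r).comp (T (r₀ - r)) := by
        rw [← hsemi r hr (r₀ - r) (by linarith)]; congr 1; ring
      rw [abs_of_nonpos (by linarith : r - r₀ ≤ (0:ℝ)), he, neg_sub]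
      calc ‖T r y - ((T r).comp (T (r₀ - r))) y‖ = ‖(T r) (y - T (r₀-r) y)‖ := by
            rw [ContinuousLinearMap.comp_apply, ← map_sub]
        _ ≤ ‖T r‖ * ‖y - T (r₀-r) y‖ := (T r).le_opNorm _
        _ ≤ M * ‖T (r₀-r) y - y‖ := by
            rw [norm_sub_rev (T (r₀-r) y)]; gcongr; exact hT r hr
  have habs : Tendsto (fun r => |r - r₀|) (nhdsWithin r₀ (Set.Ici 0)) (nhdsWithin 0 (Set.Ici 0)) := by
    apply tendsto_nhdsWithin_of_tendsto_nhds_of_eventually_within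
    · have h1 : Continuous (fun r : ℝ => |r - r₀|) := by continuity
      have h2 := h1.tendsto r₀
      simp only [sub_self, abs_zero] at h2
      exact h2.mono_left nhdsWithin_le_nhds
    · exact Filter.Eventually.of_forall (fun r => Set.mem_Ici.mpr (abs_nonneg _))
  have hlim : Tendsto (fun r => M * ‖T |r - r₀| y - y‖) (nhdsWithin r₀ (Set.Ici 0)) (nhds 0) := by
    have h1 : Tendsto (fun r => T |r - r₀| y) (nhdsWithin r₀ (Set.Ici 0)) (nhds y) := by
      have := (hc y).tendsto.comp habs
      simp only [h0] at this
      simpa [Function.comp_def] using this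
    have h2 : Tendsto (fun r => ‖T |r - r₀| y - y‖) (nhdsWithin r₀ (Set.Ici 0)) (nhds 0) := by
      have := (h1.sub (tendsto_const_nhds (x := y))).norm
      simpa using this
    simpa using (h2.const_mul M)
  rw [ContinuousWithinAt, tendsto_iff_norm_sub_tendsto_zero]
  apply squeeze_zero_norm' _ hlim
  filter_upwards [self_mem_nhdsWithin] with r hr
  simpa using key r hr

lemma bct_ftc (g : ℝ → H) (hg : ContinuousOn g (Set.Ici 0)) (t : ℝ) (ht : 0 ≤ t) :
    Tendsto (fun h : ℝ => h⁻¹ • ∫ r in t..(t+h), g r) (nhdsWithin 0 (Set.Ioi 0)) (nhds (g t)) := by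
  have hss : Set.Ioi t ⊆ Set.Ici (0:ℝ) := fun x hx => le_of_lt (lt_of_le_of_lt ht hx)
  have hint : IntervalIntegrable g volume t t :=
    (hg.mono (by simp [Set.uIcc_self, Set.singleton_subset_iff, ht])).intervalIntegrable
  have hmeas : StronglyMeasurableAtFilter g (nhdsWithin t (Set.Ioi t)) volume :=
    (hg.mono hss).stronglyMeasurableAtFilter_nhdsWithin measurableSet_Ioi t
  have hcw : ContinuousWithinAt g (Set.Ioi t) t :=
    (hg t (by simpa using ht)).mono hss
  have hderiv : HasDerivWithinAt (fun u => ∫ r in t..u, g r) (g t) (Set.Ici t) t :=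
    integral_hasDerivWithinAt_right hint hmeas hcw
  have hslope := (hasDerivWithinAt_iff_tendsto_slope).mp hderiv
  have hmap : Tendsto (fun h : ℝ => t + h) (nhdsWithin 0 (Set.Ioi 0))
      (nhdsWithin t (Set.Ici t \ {t})) := by
    apply tendsto_nhdsWithin_of_tendsto_nhds_of_eventually_within
    · have h1 : Continuous (fun h : ℝ => t + h) := by continuity
      have h2 := h1.tendsto 0
      simp only [add_zero] at h2
      exact h2.mono_left nhdsWithin_le_nhds
    · filter_upwards [self_mem_nhdsWithin] with h hh
      have : (0:ℝ) < h := hh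
      constructor
      · simp; linarith
      · simp; intro hc; linarith
  have := hslope.comp hmap
  apply this.congr
  intro h
  simp only [Function.comp_apply, slope_def_module, intervalIntegral.integral_same]
  rw [add_sub_cancel_left, sub_zero]

lemma bct_resolvent_integral
    (A : H →ₗ.[ℂ] H) (T : ℝ → (H →L[ℂ] H))
    (hsemi0 : T 0 = ContinuousLinearMap.id ℂ H)
    (hsemi : ∀ s ≥ (0:ℝ), ∀ t ≥ (0:ℝ), T (s + t) = (T s).comp (T t))
    (hgen : ∀ (x : H), (∃ hx : x ∈ A.domain, Tendsto (fun t : ℝ => t⁻¹ • (T t x - x))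
        (nhdsWithin 0 (Set.Ioi 0)) (nhds (A ⟨x, hx⟩))) ↔
      ∃ y : H, Tendsto (fun t : ℝ => t⁻¹ • (T t x - x)) (nhdsWithin 0 (Set.Ioi 0)) (nhds y))
    (hTcont : ∀ y : H, ContinuousOn (fun r => T r y) (Set.Ici 0))
    (lam : ℂ) (R : H →L[ℂ] H) (hR : IsResolventAt A lam R)
    (y : H) (t : ℝ) (ht : 0 ≤ t) :
    R y = Complex.exp (-(lam * t)) • R (T t y)
      + ∫ r in (0:ℝ)..t, Complex.exp (-(lam * r)) • T r y := by
  set g : ℝ → H := fun r => Complex.exp (-(lam * r)) • T r y with hg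
  have hcg : ContinuousOn g (Set.Ici 0) := by
    apply ContinuousOn.smul _ (hTcont y)
    exact (Complex.continuous_exp.comp (by continuity)).continuousOn
  have hint : ∀ a b : ℝ, 0 ≤ a → 0 ≤ b → IntervalIntegrable g volume a b := by
    intro a b ha hb
    apply (hcg.mono _).intervalIntegrable
    intro x hx
    simp only [Set.mem_Ici]
    calc (0:ℝ) ≤ min a b := le_min ha hb
      _ ≤ x := hx.1
  set F : H := ∫ r in (0:ℝ)..t, g r with hF
  set L : H := lam • F + g t - y with hL
  have c1 : Tendsto (fun h : ℝ => ((h:ℂ)⁻¹ * (Complex.exp (lam * h) - 1)))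
      (nhdsWithin 0 (Set.Ioi 0)) (nhds lam) := by
    have hd : HasDerivAt (fun h : ℝ => Complex.exp (lam * h)) lam 0 := by
      have h1 : HasDerivAt (fun h : ℝ => (h:ℂ)) 1 0 := by
        simpa using (hasDerivAt_id (0:ℝ)).ofReal_comp
      have h2 := (h1.const_mul lam).cexp
      simpa using h2
    have hs0 := hasDerivAt_iff_tendsto_slope.mp hd
    have h3 : Tendsto (slope (fun h : ℝ => Complex.exp (lam * h)) 0)
        (nhdsWithin 0 (Set.Ioi 0)) (nhds lam) :=
      hs0.mono_left (nhdsWithin_mono 0 (fun x hx => by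
        simp only [Set.mem_compl_iff, Set.mem_singleton_iff]
        exact ne_of_gt hx))
    apply h3.congr
    intro h
    rw [slope_def_module]
    simp only [sub_zero, Complex.ofReal_zero, mul_zero, Complex.exp_zero]
    rw [bct_smul_real, Complex.ofReal_inv, smul_eq_mul]
  have c2 : Tendsto (fun h : ℝ => h⁻¹ • ∫ r in t..(t+h), g r)
      (nhdsWithin 0 (Set.Ioi 0)) (nhds (g t)) := bct_ftc g hcg t ht
  have c3 : Tendsto (fun h : ℝ => h⁻¹ • ∫ r in (0:ℝ)..h, g r)
      (nhdsWithin 0 (Set.Ioi 0)) (nhds y) := by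
    have h0 := bct_ftc g hcg 0 le_rfl
    have hg0 : g 0 = y := by
      simp only [hg, Complex.ofReal_zero, mul_zero, neg_zero, Complex.exp_zero, one_smul, hsemi0]
      rfl
    rw [hg0] at h0
    apply h0.congr
    intro h
    rw [zero_add]
  have c4 : Tendsto (fun h : ℝ => Complex.exp (lam * h)) (nhdsWithin 0 (Set.Ioi 0)) (nhds 1) := by
    have h1 : Continuous (fun h : ℝ => Complex.exp (lam * h)) :=
      Complex.continuous_exp.comp (by continuity)
    have h2 := h1.tendsto 0
    simp only [Complex.ofReal_zero, mul_zero, Complex.exp_zero] at h2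
    exact h2.mono_left nhdsWithin_le_nhds
  have hcomb : Tendsto (fun h : ℝ =>
      ((h:ℂ)⁻¹ * (Complex.exp (lam * h) - 1)) • F
      + Complex.exp (lam * h) • (h⁻¹ • ∫ r in t..(t+h), g r)
      - Complex.exp (lam * h) • (h⁻¹ • ∫ r in (0:ℝ)..h, g r))
      (nhdsWithin 0 (Set.Ioi 0)) (nhds L) := by
    have := ((c1.smul (tendsto_const_nhds (x := F))).add (c4.smul c2)).sub (c4.smul c3)
    simpa [hL, one_smul] using this
  have heq : ∀ h ∈ Set.Ioi (0:ℝ),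
      h⁻¹ • (T h F - F) =
      ((h:ℂ)⁻¹ * (Complex.exp (lam * h) - 1)) • F
      + Complex.exp (lam * h) • (h⁻¹ • ∫ r in t..(t+h), g r)
      - Complex.exp (lam * h) • (h⁻¹ • ∫ r in (0:ℝ)..h, g r) := by
    intro h hh
    have hh0 : (0:ℝ) < h := hh
    have eq1 : T h F = Complex.exp (lam * h) • ∫ r in (0:ℝ)..t, g (r + h) := by
      rw [hF, ← ContinuousLinearMap.intervalIntegral_comp_comm (T h) (hint 0 t le_rfl ht)]
      rw [← intervalIntegral.integral_smul]
      apply intervalIntegral.integral_congr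
      intro r hr
      rw [Set.uIcc_of_le ht] at hr
      have hr0 : 0 ≤ r := hr.1
      simp only [hg]
      rw [(T h).map_smul, smul_smul]
      have hTT : T h ((T r) y) = T (r + h) y := by
        rw [add_comm r h, hsemi h hh0.le r hr0]; rfl
      rw [hTT]
      congr 1
      rw [← Complex.exp_add]
      congr 1
      push_cast
      ring
    have eq2 : ∫ r in (0:ℝ)..t, g (r + h) = ∫ r in h..(t+h), g r := by
      have := intervalIntegral.integral_comp_add_right (a := (0:ℝ)) (b := t) (d := h) g
      simpa using this
    have eq3 : ∫ r in h..(t+h), g r = -(∫ r in (0:ℝ)..h, g r) + F + ∫ r in t..(t+h), g r := by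
      have i1 := intervalIntegral.integral_add_adjacent_intervals
        (hint h 0 hh0.le le_rfl) (hint 0 (t+h) le_rfl (by linarith))
      have i2 := intervalIntegral.integral_add_adjacent_intervals
        (hint 0 t le_rfl ht) (hint t (t+h) ht (by linarith))
      rw [← i1, intervalIntegral.integral_symm 0 h, ← i2, hF]
      abel
    rw [eq1, eq2, eq3]
    have hsm : ∀ v : H, (h:ℝ)⁻¹ • v = ((h:ℂ)⁻¹) • v := by
      intro v
      rw [← smul_one_smul ℂ (h⁻¹:ℝ) v, Complex.real_smul, mul_one, Complex.ofReal_inv]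
    rw [hsm, hsm ((∫ r in t..(t+h), g r)), hsm ((∫ r in (0:ℝ)..h, g r))]
    module
  have htend : Tendsto (fun h : ℝ => h⁻¹ • (T h F - F)) (nhdsWithin 0 (Set.Ioi 0)) (nhds L) := by
    apply hcomb.congr'
    filter_upwards [self_mem_nhdsWithin] with h hh
    exact (heq h hh).symm
  obtain ⟨hx, hlim⟩ := (hgen F).mpr ⟨L, htend⟩
  have hAF : A ⟨F, hx⟩ = L := tendsto_nhds_unique hlim htend
  have hmain := hR.2 ⟨F, hx⟩
  simp only [hAF] at hmain
  have h5 : lam • F - L = y - g t := by rw [hL]; abel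
  rw [h5, map_sub] at hmain
  have h6 : R (g t) = Complex.exp (-(lam * t)) • R (T t y) := by
    simp only [hg]; rw [R.map_smul]
  rw [h6] at hmain
  rw [← hmain]
  abel

lemma bct_comm
    (A : H →ₗ.[ℂ] H) (T : ℝ → (H →L[ℂ] H))
    (hsemi0 : T 0 = ContinuousLinearMap.id ℂ H)
    (hsemi : ∀ s ≥ (0:ℝ), ∀ t ≥ (0:ℝ), T (s + t) = (T s).comp (T t))
    (M : ℝ) (hT : ∀ t ≥ (0:ℝ), ‖T t‖ ≤ M)
    (hgen : ∀ (x : H), (∃ hx : x ∈ A.domain, Tendsto (fun t : ℝ => t⁻¹ • (T t x - x))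
        (nhdsWithin 0 (Set.Ioi 0)) (nhds (A ⟨x, hx⟩))) ↔
      ∃ y : H, Tendsto (fun t : ℝ => t⁻¹ • (T t x - x)) (nhdsWithin 0 (Set.Ioi 0)) (nhds y))
    (hTcont : ∀ y : H, ContinuousOn (fun r => T r y) (Set.Ici 0))
    (R1 : H →L[ℂ] H) (hR1 : IsResolventAt A 1 R1)
    (h : ℝ) (hh : 0 ≤ h) (y : H) :
    T h (R1 y) = R1 (T h y) := by
  have key : ∀ t ≥ (0:ℝ), T h (R1 y) - R1 (T h y)
      = Complex.exp (-((1:ℂ) * t)) • (T h (R1 (T t y)) - R1 (T t (T h y))) := by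
    intro t ht
    have i1 := bct_resolvent_integral A T hsemi0 hsemi hgen hTcont 1 R1 hR1 y t ht
    have i2 := bct_resolvent_integral A T hsemi0 hsemi hgen hTcont 1 R1 hR1 (T h y) t ht
    have hint : IntervalIntegrable (fun r => Complex.exp (-((1:ℂ) * r)) • T r y) volume 0 t := by
      apply ContinuousOn.intervalIntegrable
      have hcc : ContinuousOn (fun r : ℝ => Complex.exp (-((1:ℂ) * r)) • T r y) (Set.Ici 0) :=
        ((Complex.continuous_exp.comp (by continuity)).continuousOn).smul (hTcont y)
      exact hcc.mono (by rw [Set.uIcc_of_le ht]; exact fun x hx => hx.1)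
    have happ : T h (R1 y) = Complex.exp (-((1:ℂ) * t)) • T h (R1 (T t y))
        + ∫ r in (0:ℝ)..t, Complex.exp (-((1:ℂ) * r)) • T r (T h y) := by
      rw [i1, map_add, (T h).map_smul,
        ← ContinuousLinearMap.intervalIntegral_comp_comm (T h) hint]
      congr 1
      apply intervalIntegral.integral_congr
      intro r hr
      rw [Set.uIcc_of_le ht] at hr
      have hr0 : 0 ≤ r := hr.1
      show T h (Complex.exp (-((1:ℂ) * r)) • T r y) = Complex.exp (-((1:ℂ) * r)) • T r (T h y)
      rw [(T h).map_smul]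
      congr 1
      have e1 : T h ((T r) y) = T (h + r) y := by rw [hsemi h hh r hr0]; rfl
      have e2 : T r ((T h) y) = T (r + h) y := by rw [hsemi r hr0 h hh]; rfl
      rw [e1, e2, add_comm]
    rw [happ, i2]
    rw [smul_sub]
    abel
  have hnorm : ∀ t ≥ (0:ℝ), ‖T h (R1 y) - R1 (T h y)‖
      ≤ Real.exp (-t) * (2 * (M * ‖R1‖ * (M * ‖y‖))) := by
    intro t ht
    rw [key t ht, norm_smul]
    have hexp : ‖Complex.exp (-((1:ℂ) * t))‖ = Real.exp (-t) := by
      rw [Complex.norm_exp]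
      congr 1
      simp
    rw [hexp]
    refine mul_le_mul_of_nonneg_left ?_ (Real.exp_pos _).le
    have hM0 : (0:ℝ) ≤ M := le_trans (norm_nonneg _) (hT 0 le_rfl)
    have n1 : ‖T t y‖ ≤ M * ‖y‖ :=
      le_trans ((T t).le_opNorm y) (mul_le_mul_of_nonneg_right (hT t ht) (norm_nonneg y))
    have n2 : ‖R1 (T t y)‖ ≤ ‖R1‖ * (M * ‖y‖) :=
      le_trans (R1.le_opNorm _) (mul_le_mul_of_nonneg_left n1 (norm_nonneg R1))
    have b1 : ‖T h (R1 (T t y))‖ ≤ M * (‖R1‖ * (M * ‖y‖)) :=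
      le_trans ((T h).le_opNorm _)
        (mul_le_mul (hT h hh) n2 (norm_nonneg _) hM0)
    have n3 : ‖T h y‖ ≤ M * ‖y‖ :=
      le_trans ((T h).le_opNorm y) (mul_le_mul_of_nonneg_right (hT h hh) (norm_nonneg y))
    have n4 : ‖T t (T h y)‖ ≤ M * (M * ‖y‖) :=
      le_trans ((T t).le_opNorm _) (mul_le_mul (hT t ht) n3 (norm_nonneg _) hM0)
    have b2 : ‖R1 (T t (T h y))‖ ≤ ‖R1‖ * (M * (M * ‖y‖)) :=
      le_trans (R1.le_opNorm _) (mul_le_mul_of_nonneg_left n4 (norm_nonneg _))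
    calc ‖T h (R1 (T t y)) - R1 (T t (T h y))‖
        ≤ ‖T h (R1 (T t y))‖ + ‖R1 (T t (T h y))‖ := norm_sub_le _ _
      _ ≤ M * (‖R1‖ * (M * ‖y‖)) + ‖R1‖ * (M * (M * ‖y‖)) := add_le_add b1 b2
      _ = 2 * (M * ‖R1‖ * (M * ‖y‖)) := by ring
  have hlim0 : Tendsto (fun t : ℝ => Real.exp (-t) * (2 * (M * ‖R1‖ * (M * ‖y‖))))
      atTop (nhds 0) := by
    have := (Real.tendsto_exp_neg_atTop_nhds_zero).mul_const (2 * (M * ‖R1‖ * (M * ‖y‖)))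
    simpa using this
  have hle : ‖T h (R1 y) - R1 (T h y)‖ ≤ 0 := by
    apply ge_of_tendsto hlim0
    filter_upwards [eventually_ge_atTop (0:ℝ)] with t ht
    exact hnorm t ht
  have := le_antisymm hle (norm_nonneg _)
  rwa [norm_eq_zero, sub_eq_zero] at this

lemma bct_alg (lam : ℂ) (r1y r11y ry u v : H)
    (e1 : ry = r1y - (lam - 1) • u) (e2 : r11y = (lam - 1) • v + u) :
    lam • ry = lam • r1y - (lam - 1) • r11y + (lam - 1)^2 • (v - u) := by
  subst e1 e2
  module

end BCTAux

set_option maxHeartbeats 2000000 in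
/-- **converse of Batty–Chill–Tomilov.**  Let `(T(t))` be a bounded
`C₀`-semigroup with generator `A` on a Hilbert space, `σ(A) ∩ iℝ ⊆ {0}`, and suppose
`‖T(t)A(I − A)⁻²‖ = O(t^{−1/a})` as `t → ∞` for some `a ≥ 1`.  Then
`‖(is − A)⁻¹‖ = O(|s|^{−a})` as `s → 0` and `‖(is − A)⁻¹‖ = O(|s|^a)` as `|s| → ∞`. -/
theorem batty_chill_tomilov_converse
    {H : Type*} [NormedAddCommGroup H] [InnerProductSpace ℂ H] [CompleteSpace H]
    (A : H →ₗ.[ℂ] H) (T : ℝ → (H →L[ℂ] H))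
    -- `(T(t))_{t ≥ 0}` is a bounded `C₀`-semigroup
    (hsemi0 : T 0 = ContinuousLinearMap.id ℂ H)
    (hsemi : ∀ s ≥ (0:ℝ), ∀ t ≥ (0:ℝ), T (s + t) = (T s).comp (T t))
    (hbdd : ∃ M : ℝ, ∀ t ≥ (0:ℝ), ‖T t‖ ≤ M)
    (hcont : ∀ x : H, ContinuousWithinAt (fun t => T t x) (Set.Ici 0) 0)
    -- `A` is the generator of `(T(t))`
    (hgen : ∀ (x : H), (∃ hx : x ∈ A.domain, Tendsto (fun t : ℝ => t⁻¹ • (T t x - x))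
        (nhdsWithin 0 (Set.Ioi 0)) (nhds (A ⟨x, hx⟩))) ↔
      ∃ y : H, Tendsto (fun t : ℝ => t⁻¹ • (T t x - x)) (nhdsWithin 0 (Set.Ioi 0)) (nhds y))
    -- `σ(A) ∩ iℝ ⊆ {0}`: every nonzero `is` is in the resolvent set
    (himres : ∀ s : ℝ, s ≠ 0 → ∃ R : H →L[ℂ] H, IsResolventAt A (Complex.I * s) R)
    -- `1 ∈ ρ(A)`, with resolvent `R1 = (I − A)⁻¹`, so `A(I−A)⁻² = R1∘R1 − R1`
    (R1 : H →L[ℂ] H) (hR1 : IsResolventAt A 1 R1)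
    (a : ℝ) (ha : 1 ≤ a)
    -- `‖T(t)A(I − A)⁻²‖ = O(t^{−1/a})` as `t → ∞`
    (hdecay : ∃ C > (0:ℝ), ∀ t ≥ (1:ℝ),
      ‖(T t).comp (R1.comp R1 - R1)‖ ≤ C * t ^ (-(1 / a))) :
    -- `‖(is − A)⁻¹‖ = O(|s|^{−a})` as `s → 0`
    (∃ C₁ > (0:ℝ), ∃ δ > (0:ℝ), ∀ s : ℝ, s ≠ 0 → |s| < δ →
      ∀ R : H →L[ℂ] H, IsResolventAt A (Complex.I * s) R → ‖R‖ ≤ C₁ * |s| ^ (-a)) ∧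
    -- `‖(is − A)⁻¹‖ = O(|s|^a)` as `|s| → ∞`
    (∃ C₂ > (0:ℝ), ∃ Λ : ℝ, ∀ s : ℝ, Λ ≤ |s| →
      ∀ R : H →L[ℂ] H, IsResolventAt A (Complex.I * s) R → ‖R‖ ≤ C₂ * |s| ^ a) := by
  obtain ⟨M0, hM0⟩ := hbdd
  obtain ⟨C0, hC0pos, hC0⟩ := hdecay
  set M : ℝ := max M0 1 with hMdef
  have hM : ∀ t ≥ (0:ℝ), ‖T t‖ ≤ M := fun t ht => le_trans (hM0 t ht) (le_max_left _ _)
  have hM1 : (1:ℝ) ≤ M := le_max_right _ _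
  have hM0' : (0:ℝ) ≤ M := by linarith
  set C : ℝ := max C0 1 with hCdef
  have hC1 : (1:ℝ) ≤ C := le_max_right _ _
  have hCpos : (0:ℝ) < C := lt_of_lt_of_le one_pos hC1
  have hC : ∀ t ≥ (1:ℝ), ‖(T t).comp (R1.comp R1 - R1)‖ ≤ C * t ^ (-(1 / a)) := by
    intro t ht
    refine le_trans (hC0 t ht) ?_
    apply mul_le_mul_of_nonneg_right (le_max_left _ _)
    apply Real.rpow_nonneg
    linarith
  have hTcont : ∀ y : H, ContinuousOn (fun r => T r y) (Set.Ici 0) :=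
    fun y => bct_contOn T M hM hsemi hsemi0 hcont y
  have ha0 : (0:ℝ) < a := lt_of_lt_of_le one_pos ha
  set K : ℝ := 2 * M * (‖R1‖ + ‖R1‖ ^ 2 + (2 * C) ^ a) with hKdef
  have h2Ca : (1:ℝ) ≤ (2 * C) ^ a := by
    rw [show (1:ℝ) = 1 ^ a from (Real.one_rpow a).symm]
    exact Real.rpow_le_rpow (by norm_num) (by linarith) ha0.le
  have hKpos : (0:ℝ) < K := by
    have h1 : (0:ℝ) < ‖R1‖ + ‖R1‖ ^ 2 + (2 * C) ^ a := by
      nlinarith [norm_nonneg R1, sq_nonneg ‖R1‖]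
    have h2 : (0:ℝ) < 2 * M := by linarith
    rw [hKdef]
    exact mul_pos h2 h1
  -- the master estimate
  have master : ∀ s : ℝ, s ≠ 0 → ∀ R : H →L[ℂ] H, IsResolventAt A (Complex.I * s) R →
      ‖R‖ ≤ K * ((1 + |s|) ^ 2 / |s|) ^ a := by
    intro s hs R hRs
    set lam : ℂ := Complex.I * s with hlam
    have hspos : (0:ℝ) < |s| := abs_pos.mpr hs
    have hlam_norm : ‖lam‖ = |s| := by
      rw [hlam, norm_mul, Complex.norm_I, one_mul, Complex.norm_real, Real.norm_eq_abs]
    have hlam1 : lam - 1 ≠ 0 := by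
      intro hcon
      rw [sub_eq_zero] at hcon
      have h2 := congrArg Complex.re hcon
      rw [hlam] at h2
      simp [Complex.mul_re] at h2
    -- pointwise resolvent identities
    have E1 : ∀ y : H, R1 y = (lam - 1) • R (R1 y) + R y := by
      intro y
      obtain ⟨hm, he⟩ := hR1.1 y
      rw [one_smul] at he
      have h3 : y + A ⟨R1 y, hm⟩ = R1 y := (sub_eq_iff_eq_add.mp he).symm
      rw [add_comm] at h3
      have hA : A ⟨R1 y, hm⟩ = R1 y - y := eq_sub_of_add_eq h3
      have h2 := hRs.2 ⟨R1 y, hm⟩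
      simp only [hA] at h2
      have harg : lam • R1 y - (R1 y - y) = (lam - 1) • R1 y + y := by module
      rw [harg, map_add, R.map_smul] at h2
      exact h2.symm
    have E2 : ∀ y : H, R y = (1 - lam) • R1 (R y) + R1 y := by
      intro y
      obtain ⟨hm, he⟩ := hRs.1 y
      have h3 : y + A ⟨R y, hm⟩ = lam • R y := (sub_eq_iff_eq_add.mp he).symm
      rw [add_comm] at h3
      have hA : A ⟨R y, hm⟩ = lam • R y - y := eq_sub_of_add_eq h3
      have h2 := hR1.2 ⟨R y, hm⟩
      simp only [hA] at h2
      have harg : (1:ℂ) • R y - (lam • R y - y) = (1 - lam) • R y + y := by module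
      rw [harg, map_add, R1.map_smul] at h2
      exact h2.symm
    have dagger : ∀ y : H, lam • R y = lam • R1 y - (lam - 1) • R1 (R1 y)
        + (lam - 1) ^ 2 • (R (R1 (R1 y)) - R (R1 y)) := by
      intro y
      apply bct_alg lam (R1 y) (R1 (R1 y)) (R y) (R (R1 y)) (R (R1 (R1 y)))
      · have h' : R y + (lam - 1) • R (R1 y) = R1 y := by
          rw [add_comm]; exact (E1 y).symm
        exact eq_sub_of_add_eq h'
      · exact E1 (R1 y)
    -- quantitative setup
    set κ : ℝ := (1 + |s|) ^ 2 / |s| with hκdef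
    have hκ4 : (4:ℝ) ≤ κ := by
      rw [hκdef, le_div_iff₀ hspos]
      nlinarith [sq_nonneg (1 - |s|), abs_nonneg s]
    have hκ1 : (1:ℝ) ≤ κ := by linarith
    have hκpos : (0:ℝ) < κ := by linarith
    set t : ℝ := (2 * C * κ) ^ a with htdef
    have hbase : (1:ℝ) ≤ 2 * C * κ := by nlinarith
    have ht1 : (1:ℝ) ≤ t := by
      rw [htdef, show (1:ℝ) = 1 ^ a from (Real.one_rpow a).symm]
      exact Real.rpow_le_rpow (by norm_num) hbase ha0.le
    have ht0 : (0:ℝ) ≤ t := by linarith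
    have htinv : t ^ (-(1 / a)) = (2 * C * κ)⁻¹ := by
      rw [htdef, ← Real.rpow_mul (by positivity)]
      have hexp : a * (-(1 / a)) = -1 := by field_simp
      rw [hexp, Real.rpow_neg_one]
    have hκa1 : (1:ℝ) ≤ κ ^ a := by
      rw [show (1:ℝ) = 1 ^ a from (Real.one_rpow a).symm]
      exact Real.rpow_le_rpow (by norm_num) hκ1 ha0.le
    have hκκa : κ ≤ κ ^ a := by
      calc κ = κ ^ (1:ℝ) := (Real.rpow_one κ).symm
        _ ≤ κ ^ a := Real.rpow_le_rpow_of_exponent_le hκ1 ha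
    have hts : t = (2 * C) ^ a * κ ^ a := by
      rw [htdef, ← Real.mul_rpow (by positivity) hκpos.le]
    have hρ : (1 + |s|) ^ 2 * (C * t ^ (-(1 / a))) = |s| / 2 := by
      rw [htinv, hκdef]
      field_simp
    -- step 1 : unit-modulus Laplace identity bound
    have hexpnorm : ∀ x : ℝ, ‖Complex.exp (-(lam * x))‖ = 1 := by
      intro x
      rw [Complex.norm_exp]
      have hre : (-(lam * (x:ℂ))).re = 0 := by
        rw [hlam]
        simp [Complex.mul_re]
      rw [hre, Real.exp_zero]
    have step1 : ∀ y : H, ‖R y‖ ≤ ‖R (T t y)‖ + t * (M * ‖y‖) := by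
      intro y
      have hid := bct_resolvent_integral A T hsemi0 hsemi hgen hTcont lam R hRs y t ht0
      rw [hid]
      have hIb : ‖∫ r in (0:ℝ)..t, Complex.exp (-(lam * r)) • T r y‖ ≤ (M * ‖y‖) * |t - 0| := by
        apply intervalIntegral.norm_integral_le_of_norm_le_const
        intro x hx
        rw [Set.uIoc_of_le ht0] at hx
        have hx0 : (0:ℝ) ≤ x := le_of_lt hx.1
        rw [norm_smul, hexpnorm x, one_mul]
        exact le_trans ((T x).le_opNorm y)
          (mul_le_mul_of_nonneg_right (hM x hx0) (norm_nonneg y))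
      rw [sub_zero, _root_.abs_of_nonneg ht0] at hIb
      calc ‖Complex.exp (-(lam * t)) • R (T t y) + ∫ r in (0:ℝ)..t, Complex.exp (-(lam * r)) • T r y‖
          ≤ ‖Complex.exp (-(lam * t)) • R (T t y)‖
            + ‖∫ r in (0:ℝ)..t, Complex.exp (-(lam * r)) • T r y‖ := norm_add_le _ _
        _ ≤ ‖R (T t y)‖ + (M * ‖y‖) * t := by
            rw [norm_smul, hexpnorm t, one_mul]
            exact add_le_add (le_refl _) hIb
        _ = ‖R (T t y)‖ + t * (M * ‖y‖) := by ring
    -- step 2 : resolvent decomposition bound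
    have step2 : ∀ y : H, |s| * ‖R (T t y)‖ ≤ |s| * (‖R1‖ * (M * ‖y‖))
        + (1 + |s|) * (‖R1‖ ^ 2 * (M * ‖y‖))
        + (1 + |s|) ^ 2 * (‖R‖ * ((C * t ^ (-(1 / a))) * ‖y‖)) := by
      intro y
      have hd := dagger (T t y)
      have hc1 : R1 (T t y) = T t (R1 y) :=
        (bct_comm A T hsemi0 hsemi M hM hgen hTcont R1 hR1 t ht0 y).symm
      have hc2 : R1 (R1 (T t y)) = T t (R1 (R1 y)) := by
        rw [hc1]
        exact (bct_comm A T hsemi0 hsemi M hM hgen hTcont R1 hR1 t ht0 (R1 y)).symm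
      have hBw : R1 (R1 (T t y)) - R1 (T t y) = ((T t).comp (R1.comp R1 - R1)) y := by
        simp only [ContinuousLinearMap.comp_apply, ContinuousLinearMap.sub_apply, map_sub]
        rw [hc2, hc1]
      have hd2 : lam • R (T t y) = lam • R1 (T t y) - (lam - 1) • R1 (R1 (T t y))
          + (lam - 1) ^ 2 • R (((T t).comp (R1.comp R1 - R1)) y) := by
        rw [hd, ← R.map_sub, hBw]
      have hTy : ‖T t y‖ ≤ M * ‖y‖ :=
        le_trans ((T t).le_opNorm y) (mul_le_mul_of_nonneg_right (hM t ht0) (norm_nonneg y))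
      have hR1Ty : ‖R1 (T t y)‖ ≤ ‖R1‖ * (M * ‖y‖) :=
        le_trans (R1.le_opNorm _) (mul_le_mul_of_nonneg_left hTy (norm_nonneg R1))
      have hl1 : ‖lam - 1‖ ≤ 1 + |s| := by
        calc ‖lam - 1‖ ≤ ‖lam‖ + ‖(1:ℂ)‖ := norm_sub_le _ _
          _ = 1 + |s| := by rw [hlam_norm, norm_one]; ring
      have p1 : ‖lam • R1 (T t y)‖ ≤ |s| * (‖R1‖ * (M * ‖y‖)) := by
        rw [norm_smul, hlam_norm]
        exact mul_le_mul_of_nonneg_left hR1Ty (abs_nonneg s)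
      have p2 : ‖(lam - 1) • R1 (R1 (T t y))‖ ≤ (1 + |s|) * (‖R1‖ ^ 2 * (M * ‖y‖)) := by
        rw [norm_smul]
        apply mul_le_mul hl1 _ (norm_nonneg _) (by positivity)
        calc ‖R1 (R1 (T t y))‖ ≤ ‖R1‖ * ‖R1 (T t y)‖ := R1.le_opNorm _
          _ ≤ ‖R1‖ * (‖R1‖ * (M * ‖y‖)) := mul_le_mul_of_nonneg_left hR1Ty (norm_nonneg R1)
          _ = ‖R1‖ ^ 2 * (M * ‖y‖) := by ring
      have p3 : ‖(lam - 1) ^ 2 • R (((T t).comp (R1.comp R1 - R1)) y)‖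
          ≤ (1 + |s|) ^ 2 * (‖R‖ * ((C * t ^ (-(1 / a))) * ‖y‖)) := by
        rw [norm_smul]
        have hsq : ‖(lam - 1) ^ 2‖ ≤ (1 + |s|) ^ 2 := by
          rw [norm_pow]
          exact pow_le_pow_left₀ (norm_nonneg _) hl1 2
        apply mul_le_mul hsq _ (norm_nonneg _) (by positivity)
        calc ‖R (((T t).comp (R1.comp R1 - R1)) y)‖
            ≤ ‖R‖ * ‖((T t).comp (R1.comp R1 - R1)) y‖ := R.le_opNorm _
          _ ≤ ‖R‖ * (‖(T t).comp (R1.comp R1 - R1)‖ * ‖y‖) :=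
              mul_le_mul_of_nonneg_left (ContinuousLinearMap.le_opNorm _ _) (norm_nonneg R)
          _ ≤ ‖R‖ * ((C * t ^ (-(1 / a))) * ‖y‖) :=
              mul_le_mul_of_nonneg_left
                (mul_le_mul_of_nonneg_right (hC t ht1) (norm_nonneg y)) (norm_nonneg R)
      have hnorm : |s| * ‖R (T t y)‖ = ‖lam • R (T t y)‖ := by
        rw [norm_smul, hlam_norm]
      rw [hnorm, hd2]
      calc ‖lam • R1 (T t y) - (lam - 1) • R1 (R1 (T t y))
            + (lam - 1) ^ 2 • R (((T t).comp (R1.comp R1 - R1)) y)‖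
          ≤ ‖lam • R1 (T t y) - (lam - 1) • R1 (R1 (T t y))‖
            + ‖(lam - 1) ^ 2 • R (((T t).comp (R1.comp R1 - R1)) y)‖ := norm_add_le _ _
        _ ≤ ‖lam • R1 (T t y)‖ + ‖(lam - 1) • R1 (R1 (T t y))‖
            + ‖(lam - 1) ^ 2 • R (((T t).comp (R1.comp R1 - R1)) y)‖ := by
            have := norm_sub_le (lam • R1 (T t y)) ((lam - 1) • R1 (R1 (T t y)))
            linarith
        _ ≤ _ := by linarith [p1, p2, p3]
    -- combine
    have hyineq : ∀ y : H, ‖R y‖ ≤ (K / 2 * κ ^ a + ‖R‖ / 2) * ‖y‖ := by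
      intro y
      have s1 := step1 y
      have s2 := step2 y
      have comb : |s| * ‖R y‖ ≤ |s| * (‖R1‖ * (M * ‖y‖))
          + (1 + |s|) * (‖R1‖ ^ 2 * (M * ‖y‖))
          + (1 + |s|) ^ 2 * (‖R‖ * ((C * t ^ (-(1 / a))) * ‖y‖))
          + |s| * (t * (M * ‖y‖)) := by
        calc |s| * ‖R y‖ ≤ |s| * (‖R (T t y)‖ + t * (M * ‖y‖)) :=
              mul_le_mul_of_nonneg_left s1 (abs_nonneg s)
          _ = |s| * ‖R (T t y)‖ + |s| * (t * (M * ‖y‖)) := by ring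
          _ ≤ _ := by linarith
      have base : (0:ℝ) ≤ |s| * ‖y‖ := mul_nonneg (abs_nonneg s) (norm_nonneg y)
      have e1 : (1 + |s|) ≤ |s| * κ ^ a := by
        have h1 : |s| * κ = (1 + |s|) ^ 2 := by
          rw [hκdef]
          field_simp
        have h2 : (1 + |s|) ≤ |s| * κ := by
          rw [h1]
          nlinarith [abs_nonneg s]
        calc (1 + |s|) ≤ |s| * κ := h2
          _ ≤ |s| * κ ^ a := mul_le_mul_of_nonneg_left hκκa (abs_nonneg s)
      have A1le : |s| * (‖R1‖ * (M * ‖y‖)) ≤ M * ‖R1‖ * κ ^ a * (|s| * ‖y‖) := by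
        have h1 : M * ‖R1‖ ≤ M * ‖R1‖ * κ ^ a :=
          le_mul_of_one_le_right (mul_nonneg hM0' (norm_nonneg R1)) hκa1
        calc |s| * (‖R1‖ * (M * ‖y‖)) = M * ‖R1‖ * (|s| * ‖y‖) := by ring
          _ ≤ M * ‖R1‖ * κ ^ a * (|s| * ‖y‖) := mul_le_mul_of_nonneg_right h1 base
      have A2le : (1 + |s|) * (‖R1‖ ^ 2 * (M * ‖y‖)) ≤ M * ‖R1‖ ^ 2 * κ ^ a * (|s| * ‖y‖) := by
        have hnn : (0:ℝ) ≤ M * ‖R1‖ ^ 2 * ‖y‖ :=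
          mul_nonneg (mul_nonneg hM0' (sq_nonneg _)) (norm_nonneg y)
        calc (1 + |s|) * (‖R1‖ ^ 2 * (M * ‖y‖)) = (1 + |s|) * (M * ‖R1‖ ^ 2 * ‖y‖) := by ring
          _ ≤ (|s| * κ ^ a) * (M * ‖R1‖ ^ 2 * ‖y‖) := mul_le_mul_of_nonneg_right e1 hnn
          _ = M * ‖R1‖ ^ 2 * κ ^ a * (|s| * ‖y‖) := by ring
      have A3le : |s| * (t * (M * ‖y‖)) = M * (2 * C) ^ a * κ ^ a * (|s| * ‖y‖) := by
        rw [hts]; ring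
      have hterm3 : (1 + |s|) ^ 2 * (‖R‖ * ((C * t ^ (-(1 / a))) * ‖y‖))
          = |s| * (‖R‖ / 2 * ‖y‖) := by
        calc (1 + |s|) ^ 2 * (‖R‖ * ((C * t ^ (-(1 / a))) * ‖y‖))
            = ((1 + |s|) ^ 2 * (C * t ^ (-(1 / a)))) * ‖R‖ * ‖y‖ := by ring
          _ = |s| / 2 * ‖R‖ * ‖y‖ := by rw [hρ]
          _ = |s| * (‖R‖ / 2 * ‖y‖) := by ring
      have hfin : |s| * ‖R y‖ ≤ |s| * ((K / 2 * κ ^ a + ‖R‖ / 2) * ‖y‖) := by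
        have hKexp : K / 2 = M * ‖R1‖ + M * ‖R1‖ ^ 2 + M * (2 * C) ^ a := by
          rw [hKdef]; ring
        calc |s| * ‖R y‖ ≤ |s| * (‖R1‖ * (M * ‖y‖))
              + (1 + |s|) * (‖R1‖ ^ 2 * (M * ‖y‖))
              + (1 + |s|) ^ 2 * (‖R‖ * ((C * t ^ (-(1 / a))) * ‖y‖))
              + |s| * (t * (M * ‖y‖)) := comb
          _ ≤ M * ‖R1‖ * κ ^ a * (|s| * ‖y‖) + M * ‖R1‖ ^ 2 * κ ^ a * (|s| * ‖y‖)
              + |s| * (‖R‖ / 2 * ‖y‖) + M * (2 * C) ^ a * κ ^ a * (|s| * ‖y‖) := by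
              linarith [A1le, A2le, le_of_eq A3le, le_of_eq hterm3]
          _ = |s| * ((M * ‖R1‖ + M * ‖R1‖ ^ 2 + M * (2 * C) ^ a) * κ ^ a * ‖y‖
              + ‖R‖ / 2 * ‖y‖) := by ring
          _ = |s| * ((K / 2 * κ ^ a + ‖R‖ / 2) * ‖y‖) := by rw [hKexp]; ring
      exact le_of_mul_le_mul_left hfin hspos
    have hbd : ‖R‖ ≤ K / 2 * κ ^ a + ‖R‖ / 2 := by
      apply R.opNorm_le_bound _ hyineq
      have h1 : (0:ℝ) ≤ K / 2 * κ ^ a :=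
        mul_nonneg (by linarith) (Real.rpow_nonneg hκpos.le a)
      have h2 : (0:ℝ) ≤ ‖R‖ / 2 := by positivity
      linarith
    linarith
  -- conclude the two asymptotic bounds
  have h4a : (0:ℝ) < (4:ℝ) ^ a := Real.rpow_pos_of_pos (by norm_num) a
  constructor
  · refine ⟨K * 4 ^ a, mul_pos hKpos h4a, 1, one_pos, ?_⟩
    intro s hs hslt R hRs
    have hm := master s hs R hRs
    have hsp : (0:ℝ) < |s| := abs_pos.mpr hs
    have hb : (1 + |s|) ^ 2 / |s| ≤ 4 / |s| := by
      apply (div_le_div_iff_of_pos_right hsp).mpr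
      nlinarith [abs_nonneg s]
    have hmono : ((1 + |s|) ^ 2 / |s|) ^ a ≤ (4 / |s|) ^ a :=
      Real.rpow_le_rpow (by positivity) hb ha0.le
    have heq4 : (4 / |s|) ^ a = 4 ^ a * |s| ^ (-a) := by
      rw [Real.div_rpow (by norm_num) (abs_nonneg s), Real.rpow_neg (abs_nonneg s),
        div_eq_mul_inv]
    calc ‖R‖ ≤ K * ((1 + |s|) ^ 2 / |s|) ^ a := hm
      _ ≤ K * (4 / |s|) ^ a := mul_le_mul_of_nonneg_left hmono hKpos.le
      _ = K * 4 ^ a * |s| ^ (-a) := by rw [heq4]; ring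
  · refine ⟨K * 4 ^ a, mul_pos hKpos h4a, 1, ?_⟩
    intro s hsge R hRs
    have hs : s ≠ 0 := by
      intro hc
      rw [hc] at hsge
      simp at hsge
      linarith
    have hm := master s hs R hRs
    have hsp : (0:ℝ) < |s| := abs_pos.mpr hs
    have hb : (1 + |s|) ^ 2 / |s| ≤ 4 * |s| := by
      rw [div_le_iff₀ hsp]
      nlinarith [abs_nonneg s]
    have hmono : ((1 + |s|) ^ 2 / |s|) ^ a ≤ (4 * |s|) ^ a :=
      Real.rpow_le_rpow (by positivity) hb ha0.le
    have heq4 : (4 * |s|) ^ a = 4 ^ a * |s| ^ a :=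
      Real.mul_rpow (by norm_num) (abs_nonneg s)
    calc ‖R‖ ≤ K * ((1 + |s|) ^ 2 / |s|) ^ a := hm
      _ ≤ K * (4 * |s|) ^ a := mul_le_mul_of_nonneg_left hmono hKpos.le
      _ = K * 4 ^ a * |s| ^ a := by rw [heq4]; ring
end
end
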